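/- arXiv:2604.17874 — 4 statements merged into one kernel-verified Lean document; each statement's English description precedes it below -/
import Mathlib

section
/- Let σ : Fin n → Fin 4 be a Pauli string on n qubits. If num_Y(σ) is even, then every entry of the matrix P(σ) is real, i.e., (P(σ) i j).im = 0 for all indices i, j. -/
open Finset

/-- The single-qubit Pauli matrices `I, X, Y, Z`, indexed by `Fin 4`. -/
def pauliMat : Fin 4 → Matrix (Fin 2) (Fin 2) ℂ
  | 0 => !![1, 0; 0, 1]
  | 1 => !![0, 1; 1, 0]
  | 2 => !![0, -Complex.I; Complex.I, 0]
  | 3 => !![1, 0; 0, -1]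

/-- The `k`-th binary digit of an index `i < 2 ^ n`. -/
def qbit {n : ℕ} (i : Fin (2 ^ n)) (k : Fin n) : Fin 2 :=
  ⟨(i : ℕ) / 2 ^ (k : ℕ) % 2, Nat.mod_lt _ (by norm_num)⟩

/-- The matrix of a Pauli string `σ : Fin n → Fin 4`: the `n`-fold Kronecker product of the
single-qubit Pauli matrices chosen by `σ`, written entrywise in binary indexing. -/
def pauliString {n : ℕ} (σ : Fin n → Fin 4) : Matrix (Fin (2 ^ n)) (Fin (2 ^ n)) ℂ :=
  Matrix.of fun i j => ∏ k : Fin n, pauliMat (σ k) (qbit i k) (qbit j k)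

/-- The number of `Y` operators in a Pauli string. -/
def numY {n : ℕ} (σ : Fin n → Fin 4) : ℕ :=
  (Finset.univ.filter fun i => σ i = 2).card

lemma pauliMat_decomp (a : Fin 4) (x y : Fin 2) :
    ∃ r : ℝ, pauliMat a x y = (r : ℂ) * Complex.I ^ (if a = 2 then 1 else 0) := by
  fin_cases a <;> fin_cases x <;> fin_cases y <;>
    first
      | (refine ⟨1, ?_⟩; norm_num [pauliMat, Fin.ext_iff]; done)
      | (refine ⟨0, ?_⟩; norm_num [pauliMat, Fin.ext_iff]; done)
      | (refine ⟨-1, ?_⟩; norm_num [pauliMat, Fin.ext_iff]; done)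

/-- **Reduction via reality, part 1.** If a Pauli string contains an even number of `Y`
operators, then every entry of its matrix is real. -/
theorem pauliString_entries_real_of_even_numY
    {n : ℕ} (σ : Fin n → Fin 4) (h : Even (numY σ)) :
    ∀ i j, (pauliString σ i j).im = 0 := by
  intro i j
  choose r hr using fun k => pauliMat_decomp (σ k) (qbit i k) (qbit j k)
  have hcount : (∑ k : Fin n, if σ k = 2 then 1 else 0) = numY σ := by
    rw [numY, Finset.card_filter]
  have hps : pauliString σ i j = (∏ k, (r k : ℂ)) * Complex.I ^ numY σ := by
    simp only [pauliString, Matrix.of_apply]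
    rw [Finset.prod_congr rfl fun k _ => hr k, Finset.prod_mul_distrib,
      Finset.prod_pow_eq_pow_sum, hcount]
  obtain ⟨m, hm⟩ := h
  have hI : Complex.I ^ numY σ = ((-1 : ℝ) ^ m : ℂ) := by
    rw [hm, ← two_mul, pow_mul, Complex.I_sq]
    push_cast; ring
  rw [hps, hI, ← Complex.ofReal_prod, ← Complex.ofReal_pow, ← Complex.ofReal_mul]
  exact Complex.ofReal_im _
end

section
/- Let σ, τ : Fin n → Fin 4 be Pauli strings on n qubits with num_Y(σ) odd and num_Y(τ) even, and let ψ : Fin (2^n) → ℝ be a real vector, regarded as a complex vector via coercion. Then the real part of the quadratic form ∑ i j, (ψ i) * ((P(σ) * P(τ)) i j) * (ψ j) is zero. (This is the vanishing S_{IJ} = 2 Re⟨ψ| σ_I σ_J |ψ⟩ = 0 between odd-Y and even-Y Pauli operators for real states.) -/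
open Finset

lemma conj_pauliMat (a : Fin 4) (i j : Fin 2) :
    (starRingEnd ℂ) (pauliMat a i j) = (if a = 2 then -1 else 1) * pauliMat a i j := by
  fin_cases a <;> fin_cases i <;> fin_cases j <;>
    simp [pauliMat, Complex.conj_I]

lemma conj_pauliString {n : ℕ} (σ : Fin n → Fin 4) (i j : Fin (2 ^ n)) :
    (starRingEnd ℂ) (pauliString σ i j) = (-1) ^ (numY σ) * pauliString σ i j := by
  simp only [pauliString, Matrix.of_apply, map_prod, conj_pauliMat]
  rw [Finset.prod_mul_distrib, Finset.prod_ite, Finset.prod_const, Finset.prod_const_one,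
    mul_one]
  rfl

/-- **Vanishing of `S_{IJ}` between odd-`Y` and even-`Y` Pauli strings for real states.**
For Pauli strings `σ` (odd number of `Y`'s) and `τ` (even number of `Y`'s) and a real state
`ψ`, the real part of the quadratic form `⟨ψ| P(σ) P(τ) |ψ⟩` vanishes. -/
theorem re_quadratic_form_eq_zero_of_odd_even
    {n : ℕ} (σ τ : Fin n → Fin 4) (hσ : Odd (numY σ)) (hτ : Even (numY τ))
    (ψ : Fin (2 ^ n) → ℝ) :
    (∑ i, ∑ j, (ψ i : ℂ) * ((pauliString σ * pauliString τ) i j) * (ψ j)).re = 0 := by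
  set S := ∑ i, ∑ j, (ψ i : ℂ) * ((pauliString σ * pauliString τ) i j) * (ψ j) with hS
  have hconj : (starRingEnd ℂ) S = -S := by
    rw [hS, map_sum]
    rw [← Finset.sum_neg_distrib]
    refine Finset.sum_congr rfl fun i _ => ?_
    rw [map_sum, ← Finset.sum_neg_distrib]
    refine Finset.sum_congr rfl fun j _ => ?_
    simp only [map_mul, Complex.conj_ofReal, Matrix.mul_apply, map_sum, conj_pauliString]
    have : ∑ k, (-1 : ℂ) ^ numY σ * pauliString σ i k * ((-1) ^ numY τ * pauliString τ k j)
        = -∑ k, pauliString σ i k * pauliString τ k j := by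
      rw [← Finset.sum_neg_distrib]
      refine Finset.sum_congr rfl fun k _ => ?_
      rw [hσ.neg_one_pow, hτ.neg_one_pow]
      ring
    rw [this]
    ring
  have h1 : S.re = ((starRingEnd ℂ) S).re := (Complex.conj_re S).symm
  rw [hconj, Complex.neg_re] at h1
  linarith
end

section
/- Let L and Pl be finite types (links and plaquettes), let B : Pl → Finset L be a boundary map, and define f : Finset Pl → Finset L by f S = {l | the number of p ∈ S with l ∈ B p is odd} (the 𝔽₂-sum of the boundaries of the plaquettes in S). Suppose f is injective. Then the number of functions σ : L → Fin 4 such that there exists a nonempty S : Finset Pl with {i | σ i = 2 ∨ σ i = 3} = f S and the cardinality of {i | σ i = 2} is odd, equals 2^(Fintype.card L - 1) * (2^(Fintype.card Pl) - 1). -/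
open Finset

lemma fin4_cases (x : Fin 4) : x = 0 ∨ x = 1 ∨ x = 2 ∨ x = 3 :=
  (by decide : ∀ y : Fin 4, y = 0 ∨ y = 1 ∨ y = 2 ∨ y = 3) x

lemma half_powerset {α : Type*} [DecidableEq α] (T : Finset α) (hT : T.Nonempty) :
    (T.powerset.filter fun A => Odd A.card).card = 2 ^ (T.card - 1) := by
  obtain ⟨a, ha⟩ := hT
  have key : (T.powerset.filter fun A => Odd A.card).card
      = (T.powerset.filter fun A => ¬ Odd A.card).card := by
    apply Finset.card_nbij' (fun A => if a ∈ A then A.erase a else insert a A)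
      (fun A => if a ∈ A then A.erase a else insert a A)
    · intro A hA
      simp only [mem_coe, mem_filter, mem_powerset, Nat.odd_iff] at hA ⊢
      split_ifs with h
      · refine ⟨(erase_subset _ _).trans hA.1, ?_⟩
        rw [card_erase_of_mem h]
        have : 1 ≤ A.card := card_pos.2 ⟨a, h⟩
        omega
      · refine ⟨insert_subset ha hA.1, ?_⟩
        rw [card_insert_of_notMem h]; omega
    · intro A hA
      simp only [mem_coe, mem_filter, mem_powerset, Nat.odd_iff] at hA ⊢
      split_ifs with h
      · refine ⟨(erase_subset _ _).trans hA.1, ?_⟩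
        rw [card_erase_of_mem h]
        have : 1 ≤ A.card := card_pos.2 ⟨a, h⟩
        omega
      · refine ⟨insert_subset ha hA.1, ?_⟩
        rw [card_insert_of_notMem h]; omega
    · intro A hA
      by_cases h : a ∈ A
      · simp [h, insert_erase h]
      · simp [h, erase_insert h]
    · intro A hA
      by_cases h : a ∈ A
      · simp [h, insert_erase h]
      · simp [h, erase_insert h]
  have total : (T.powerset.filter fun A => Odd A.card).card
      + (T.powerset.filter fun A => ¬ Odd A.card).card = 2 ^ T.card := by
    rw [Finset.card_filter_add_card_filter_not, card_powerset]
  have hc : 1 ≤ T.card := card_pos.2 ⟨a, ha⟩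
  have h2 : 2 ^ T.card = 2 * 2 ^ (T.card - 1) := by
    rw [← pow_succ']
    congr 1
    omega
  omega

lemma supp_count {L : Type*} [Fintype L] [DecidableEq L] (T : Finset L) (hT : T.Nonempty) :
    (univ.filter fun σ : L → Fin 4 =>
        (univ.filter fun i => σ i = 2 ∨ σ i = 3) = T ∧
        Odd (univ.filter fun i => σ i = 2).card).card = 2 ^ (Fintype.card L - 1) := by
  have key : (univ.filter fun σ : L → Fin 4 =>
        (univ.filter fun i => σ i = 2 ∨ σ i = 3) = T ∧
        Odd (univ.filter fun i => σ i = 2).card).card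
      = ((T.powerset.filter fun A => Odd A.card) ×ˢ Tᶜ.powerset).card := by
    apply Finset.card_nbij'
      (fun σ => (univ.filter fun i => σ i = 2, univ.filter fun i => σ i = 1))
      (fun p l => if l ∈ p.1 then 2 else if l ∈ T then 3 else if l ∈ p.2 then 1 else 0)
    · intro σ hσ
      simp only [mem_coe, mem_filter, mem_univ, true_and] at hσ
      simp only [mem_coe, mem_product, mem_filter, mem_powerset]
      refine ⟨⟨?_, hσ.2⟩, ?_⟩
      · rw [← hσ.1]
        intro l hl
        simp only [mem_filter, mem_univ, true_and] at hl ⊢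
        exact Or.inl hl
      · intro l hl
        simp only [mem_filter, mem_univ, true_and] at hl
        rw [mem_compl, ← hσ.1]
        simp [hl]
    · rintro ⟨A, C⟩ hp
      simp only [mem_coe, mem_product, mem_filter, mem_powerset] at hp
      obtain ⟨⟨hA, hodd⟩, hC⟩ := hp
      have hAT : ∀ l ∈ A, l ∈ T := fun l h => hA h
      have hCT : ∀ l ∈ C, l ∉ T := fun l h => mem_compl.1 (hC h)
      simp only [mem_coe, mem_filter, mem_univ, true_and]
      have hA2 : (univ.filter fun l => (if l ∈ A then (2:Fin 4) else if l ∈ T then 3 else if l ∈ C then 1 else 0) = 2) = A := by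
        ext l
        simp only [mem_filter, mem_univ, true_and]
        split_ifs with h1 h2 h3 <;> simp_all
      refine ⟨?_, by rw [hA2]; exact hodd⟩
      ext l
      simp only [mem_filter, mem_univ, true_and]
      split_ifs with h1 h2 h3
      · simpa using hAT l h1
      · simpa using h2
      · simpa using fun h => hCT l h3 h
      · simpa using h2
    · intro σ hσ
      simp only [mem_coe, mem_filter, mem_univ, true_and] at hσ
      funext l
      have hlT : (l ∈ T) = (σ l = 2 ∨ σ l = 3) := by rw [← hσ.1]; simp
      rcases fin4_cases (σ l) with h | h | h | h <;> simp [h, hlT]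
    · rintro ⟨A, C⟩ hp
      simp only [mem_coe, mem_product, mem_filter, mem_powerset] at hp
      obtain ⟨⟨hA, hodd⟩, hC⟩ := hp
      have hAT : ∀ l ∈ A, l ∈ T := fun l h => hA h
      have hCT : ∀ l ∈ C, l ∉ T := fun l h => mem_compl.1 (hC h)
      have e1 : (univ.filter fun l => (if l ∈ A then (2:Fin 4) else if l ∈ T then 3 else if l ∈ C then 1 else 0) = 2) = A := by
        ext l
        simp only [mem_filter, mem_univ, true_and]
        split_ifs with h1 h2 h3 <;> simp_all
      have e2 : (univ.filter fun l => (if l ∈ A then (2:Fin 4) else if l ∈ T then 3 else if l ∈ C then 1 else 0) = 1) = C := by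
        ext l
        simp only [mem_filter, mem_univ, true_and]
        split_ifs with h1 h2 h3
        · simpa using fun h => hCT l h (hAT l h1)
        · simpa using fun h => hCT l h h2
        · simpa using h3
        · simpa using h3
      simp only [e1, e2]
  rw [key, card_product, half_powerset T hT, card_powerset, card_compl]
  rw [← pow_add]
  have h1 : 1 ≤ T.card := card_pos.2 hT
  have h2 : T.card ≤ Fintype.card L := card_le_univ T
  have h3 : (T.card - 1) + (Fintype.card L - T.card) = Fintype.card L - 1 := by clear hT key; omega
  rw [h3]

/-- **Size of the reduced Pauli pool `P_{G,odd}` in the pure ℤ₂ lattice gauge theory.**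
Let `L` be the set of links and `Pl` the set of plaquettes, with boundary map `B`, and let
`f S` be the 𝔽₂-sum of the boundaries of the plaquettes in `S` (the set of links belonging
to an odd number of plaquettes of `S`). If `f` is injective, then the number of Pauli
assignments `σ : L → Fin 4` whose YZ-support is `f S` for some nonempty set of plaquettes
`S` and which contain an odd number of `Y`'s equals `2 ^ (n_link - 1) * (2 ^ n_plaq - 1)`. -/
theorem card_reduced_pauli_pool
    {L Pl : Type*} [Fintype L] [DecidableEq L] [Fintype Pl] [DecidableEq Pl]
    (B : Pl → Finset L) (f : Finset Pl → Finset L)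
    (hf : ∀ S : Finset Pl,
      f S = Finset.univ.filter fun l => Odd (S.filter fun p => l ∈ B p).card)
    (hinj : Function.Injective f) :
    (Finset.univ.filter fun σ : L → Fin 4 =>
        (∃ S : Finset Pl, S.Nonempty ∧
          (Finset.univ.filter fun i => σ i = 2 ∨ σ i = 3) = f S) ∧
        Odd (Finset.univ.filter fun i => σ i = 2).card).card
      = 2 ^ (Fintype.card L - 1) * (2 ^ Fintype.card Pl - 1) := by
  classical
  have hfe : f ∅ = ∅ := by
    rw [hf]
    simp [Nat.odd_iff]
  have hne : ∀ S : Finset Pl, S.Nonempty → (f S).Nonempty := by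
    intro S hS
    rw [Finset.nonempty_iff_ne_empty]
    intro h
    rw [← hfe] at h
    exact (Finset.nonempty_iff_ne_empty.1 hS) (hinj h)
  have hset : (Finset.univ.filter fun σ : L → Fin 4 =>
        (∃ S : Finset Pl, S.Nonempty ∧
          (Finset.univ.filter fun i => σ i = 2 ∨ σ i = 3) = f S) ∧
        Odd (Finset.univ.filter fun i => σ i = 2).card)
      = ((univ : Finset Pl).powerset.filter (·.Nonempty)).biUnion
          (fun S => Finset.univ.filter fun σ : L → Fin 4 =>
            (Finset.univ.filter fun i => σ i = 2 ∨ σ i = 3) = f S ∧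
            Odd (Finset.univ.filter fun i => σ i = 2).card) := by
    ext σ
    simp only [mem_filter, mem_univ, true_and, mem_biUnion, mem_powerset]
    constructor
    · rintro ⟨⟨S, hS, hsupp⟩, hodd⟩
      exact ⟨S, ⟨Finset.subset_univ S, hS⟩, hsupp, hodd⟩
    · rintro ⟨S, hS, hsupp, hodd⟩
      exact ⟨⟨S, hS.2, hsupp⟩, hodd⟩
  rw [hset, card_biUnion]
  · rw [Finset.sum_congr rfl (fun S hS => ?_), Finset.sum_const, smul_eq_mul, mul_comm]
    · congr 1
      have : ((univ : Finset Pl).powerset.filter (·.Nonempty))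
          = (univ : Finset Pl).powerset.erase ∅ := by
        rw [← Finset.filter_ne']
        apply Finset.filter_congr
        intro S _
        simp [Finset.nonempty_iff_ne_empty]
      rw [this, Finset.card_erase_of_mem (by simp), card_powerset, card_univ]
    · simp only [mem_filter, mem_powerset] at hS
      exact supp_count (f S) (hne S hS.2)
  · intro S hS S' hS' hSS'
    simp only [mem_coe, mem_filter, mem_powerset] at hS hS'
    refine Finset.disjoint_left.2 fun σ h1 h2 => ?_
    simp only [mem_filter, mem_univ, true_and] at h1 h2
    exact hSS' (hinj (h1.1.symm.trans h2.1))
end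

section
/- Let σ : Fin n → Fin 4 be a Pauli string and g : Fin n → Fin 4 a Pauli string taking only values 0 (identity) and 1 (X), with X-support G = {i | g i = 1}. Define τ : Fin n → Fin 4 by: τ i = 3 if i ∈ G and σ i = 2 (Y ↦ Z); τ i = 2 if i ∈ G and σ i = 3 (Z ↦ Y); τ i = 1 if i ∈ G and σ i = 0 (I ↦ X); τ i = 0 if i ∈ G and σ i = 1 (X ↦ I); and τ i = σ i if i ∉ G. If the cardinality of (YZ-support of σ) ∩ G is even, then there exists ε ∈ ({1, -1} : Set ℂ) with P(σ) * P(g) = ε • P(τ); moreover τ has the same YZ-support as σ, and the number of Y's in τ is congruent to the number of Y's in σ modulo 2. -/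
open Finset

/-- Scalar produced when multiplying a Pauli by `I` or `X` on the right. -/
def pSign (s t : Fin 4) : ℂ :=
  if t = 1 then (if s = 2 then -Complex.I else if s = 3 then Complex.I else 1) else 1

/-- Resulting Pauli label when multiplying by `I` or `X` on the right. -/
def pMul (s t : Fin 4) : Fin 4 :=
  if t = 1 then (if s = 2 then 3 else if s = 3 then 2 else if s = 0 then 1 else 0) else s

lemma qbit_eq {n : ℕ} (i : Fin (2 ^ n)) (k : Fin n) :
    qbit i k = finFunctionFinEquiv.symm i k := by
  ext; simp [qbit, finFunctionFinEquiv]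

lemma pauli_single (s t : Fin 4) (h : t = 0 ∨ t = 1) :
    pauliMat s * pauliMat t = pSign s t • pauliMat (pMul s t) := by
  rcases h with h | h <;> subst h <;> fin_cases s <;>
    · ext i j
      fin_cases i <;> fin_cases j <;>
        simp [pauliMat, pSign, pMul, Matrix.mul_apply, Fin.sum_univ_two]

lemma pauliString_mul_apply {n : ℕ} (σ g : Fin n → Fin 4) (i j : Fin (2 ^ n)) :
    (pauliString σ * pauliString g) i j
      = ∏ k : Fin n, (pauliMat (σ k) * pauliMat (g k)) (qbit i k) (qbit j k) := by
  simp only [Matrix.mul_apply, pauliString, Matrix.of_apply]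
  rw [Finset.prod_univ_sum]
  rw [Fintype.piFinset_univ]
  rw [← Equiv.sum_comp (finFunctionFinEquiv.symm :
        Fin (2 ^ n) ≃ (Fin n → Fin 2))
      (fun x => ∏ k : Fin n, pauliMat (σ k) (qbit i k) (x k) * pauliMat (g k) (x k) (qbit j k))]
  refine Finset.sum_congr rfl fun m _ => ?_
  rw [← Finset.prod_mul_distrib]
  exact Finset.prod_congr rfl fun k _ => by rw [← qbit_eq]

lemma prod_ite_one_eq_pow {n : ℕ} (c : ℂ) (p : Fin n → Prop) [DecidablePred p] :
    ∏ k : Fin n, (if p k then c else 1) = c ^ (Finset.univ.filter p).card := by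
  rw [← Finset.prod_filter_mul_prod_filter_not Finset.univ p]
  rw [Finset.prod_congr rfl (fun k hk => if_pos (Finset.mem_filter.mp hk).2),
    Finset.prod_congr rfl (fun k hk => if_neg (Finset.mem_filter.mp hk).2)]
  simp [Finset.prod_const]

/-- **Right action of a bulk Gauss's law operator on the reduced Pauli pool.**
Let `g` be a Pauli string of identities and `X`'s with `X`-support `G = {i | g i = 1}`, and
let `τ` be obtained from `σ` by exchanging `Y ↔ Z` and `I ↔ X` on `G`. If the intersection
of the YZ-support of `σ` with `G` has even cardinality, then `P(σ) P(g) = ± P(τ)`; moreover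
`τ` has the same YZ-support as `σ` and the same parity of the number of `Y`'s. -/
theorem pauliString_mul_gauss_eq_sign_smul
    {n : ℕ} (σ g : Fin n → Fin 4) (hg : ∀ i, g i = 0 ∨ g i = 1)
    (τ : Fin n → Fin 4)
    (hτ : ∀ i, τ i =
      if g i = 1 then
        (if σ i = 2 then 3 else if σ i = 3 then 2 else if σ i = 0 then 1 else 0)
      else σ i)
    (heven : Even ((Finset.univ.filter fun i => (σ i = 2 ∨ σ i = 3) ∧ g i = 1).card)) :
    (∃ ε ∈ ({1, -1} : Set ℂ), pauliString σ * pauliString g = ε • pauliString τ) ∧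
    (Finset.univ.filter fun i => τ i = 2 ∨ τ i = 3)
      = (Finset.univ.filter fun i => σ i = 2 ∨ σ i = 3) ∧
    numY τ % 2 = numY σ % 2 := by
  have hτ' : ∀ i, τ i = pMul (σ i) (g i) := fun i => by rw [hτ i]; rfl
  set S := Finset.univ.filter fun i => σ i = 2 ∧ g i = 1 with hS
  set T := Finset.univ.filter fun i => σ i = 3 ∧ g i = 1 with hT
  -- the Y∩G and Z∩G cardinalities
  have hST : Disjoint S T := by
    rw [Finset.disjoint_left]
    intro k hk hk'
    simp only [hS, hT, Finset.mem_filter] at hk hk'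
    rw [hk.2.1] at hk'
    exact absurd hk'.2.1 (by decide)
  have hUnion : (Finset.univ.filter fun i => (σ i = 2 ∨ σ i = 3) ∧ g i = 1) = S ∪ T := by
    ext k
    simp only [hS, hT, Finset.mem_union, Finset.mem_filter, Finset.mem_univ, true_and]
    tauto
  have hcard : ((Finset.univ.filter fun i => (σ i = 2 ∨ σ i = 3) ∧ g i = 1)).card
      = S.card + T.card := by rw [hUnion, Finset.card_union_of_disjoint hST]
  rw [hcard] at heven
  obtain ⟨m, hm⟩ := heven
  refine ⟨?_, ?_, ?_⟩
  · -- the matrix identity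
    refine ⟨(-1 : ℂ) ^ (S.card + m), ?_, ?_⟩
    · rcases neg_one_pow_eq_or ℂ (S.card + m) with h | h <;> simp [h]
    · have hsign : ∀ k, pSign (σ k) (g k)
          = (if σ k = 2 ∧ g k = 1 then -Complex.I else 1)
            * (if σ k = 3 ∧ g k = 1 then Complex.I else 1) := by
        intro k
        rcases hg k with h | h <;>
          by_cases h2 : σ k = 2 <;> by_cases h3 : σ k = 3 <;>
            simp [pSign, h, h2, h3]
      have hε : (∏ k : Fin n, pSign (σ k) (g k)) = (-1 : ℂ) ^ (S.card + m) := by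
        calc (∏ k : Fin n, pSign (σ k) (g k))
            = (∏ k : Fin n, (if σ k = 2 ∧ g k = 1 then -Complex.I else 1))
              * (∏ k : Fin n, (if σ k = 3 ∧ g k = 1 then Complex.I else 1)) := by
              rw [← Finset.prod_mul_distrib]
              exact Finset.prod_congr rfl fun k _ => hsign k
          _ = (-Complex.I) ^ S.card * Complex.I ^ T.card := by
              rw [prod_ite_one_eq_pow, prod_ite_one_eq_pow]
          _ = (-1 : ℂ) ^ S.card * (Complex.I ^ S.card * Complex.I ^ T.card) := by
              rw [neg_pow]; ring
          _ = (-1 : ℂ) ^ S.card * Complex.I ^ (S.card + T.card) := by rw [pow_add]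
          _ = (-1 : ℂ) ^ S.card * (-1 : ℂ) ^ m := by
              rw [hm, ← two_mul, pow_mul, Complex.I_sq]
          _ = (-1 : ℂ) ^ (S.card + m) := by rw [pow_add]
      ext i j
      rw [pauliString_mul_apply, Matrix.smul_apply, smul_eq_mul, ← hε]
      calc (∏ k : Fin n, (pauliMat (σ k) * pauliMat (g k)) (qbit i k) (qbit j k))
          = ∏ k : Fin n, pSign (σ k) (g k) * pauliMat (pMul (σ k) (g k)) (qbit i k) (qbit j k) := by
            refine Finset.prod_congr rfl fun k _ => ?_
            rw [pauli_single (σ k) (g k) (hg k)]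
            simp
        _ = (∏ k : Fin n, pSign (σ k) (g k)) * ∏ k : Fin n,
              pauliMat (τ k) (qbit i k) (qbit j k) := by
            rw [← Finset.prod_mul_distrib]
            exact Finset.prod_congr rfl fun k _ => by rw [hτ' k]
        _ = (∏ k : Fin n, pSign (σ k) (g k)) * pauliString τ i j := rfl
  · -- same YZ-support
    ext i
    simp only [Finset.mem_filter, Finset.mem_univ, true_and, hτ' i, pMul]
    rcases hg i with h | h <;> rw [h]
    · simp
    · simp only [if_pos rfl]
      generalize σ i = s
      fin_cases s <;> decide
  · -- parity of number of Y's
    have key : ∀ (ρ : Fin n → Fin 4),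
        (Finset.univ.filter fun i => ρ i = 2).card
          = (Finset.univ.filter fun i => ρ i = 2 ∧ g i = 1).card
            + (Finset.univ.filter fun i => ρ i = 2 ∧ ¬ g i = 1).card := by
      intro ρ
      rw [← Finset.filter_filter, ← Finset.filter_filter]
      exact (Finset.card_filter_add_card_filter_not (fun i => g i = 1)).symm
    have h1 : (Finset.univ.filter fun i => τ i = 2 ∧ g i = 1) = T := by
      ext i
      simp only [hT, Finset.mem_filter, Finset.mem_univ, true_and, hτ' i, pMul]
      constructor
      · rintro ⟨h2, h1⟩
        rw [if_pos h1] at h2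
        refine ⟨?_, h1⟩
        revert h2
        generalize σ i = s
        fin_cases s <;> decide
      · rintro ⟨h3, h1⟩
        rw [h3, if_pos h1]
        exact ⟨rfl, h1⟩
    have h2 : (Finset.univ.filter fun i => τ i = 2 ∧ ¬ g i = 1)
        = (Finset.univ.filter fun i => σ i = 2 ∧ ¬ g i = 1) := by
      ext i
      simp only [Finset.mem_filter, Finset.mem_univ, true_and, hτ' i, pMul]
      constructor
      · rintro ⟨ha, hb⟩; rw [if_neg hb] at ha; exact ⟨ha, hb⟩
      · rintro ⟨ha, hb⟩; rw [if_neg hb]; exact ⟨ha, hb⟩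
    have hτY : numY τ = T.card + (Finset.univ.filter fun i => σ i = 2 ∧ ¬ g i = 1).card := by
      rw [numY, key τ, h1, h2]
    have hσY : numY σ = S.card + (Finset.univ.filter fun i => σ i = 2 ∧ ¬ g i = 1).card := by
      rw [numY, key σ, hS]
    omega
end
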